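/- arXiv:1507.01994 — 2 statements merged into one kernel-verified Lean document; each statement's English description precedes it below -/
import Mathlib

section
/- For every integer K ≥ 1 and every integer 1 ≤ k ≤ K, the k-order network distance d_P^k restricted to K-order proximity networks is a metric on the space of K-order proximity networks modulo k-isomorphism: it is nonnegative, symmetric, satisfies the triangle inequality, and d_P^k(P_X,P_Y) = 0 holds if and only if P_X and P_Y are k-isomorphic. -/
open scoped ENNReal

/-- A correspondence between node sets `X` and `Y`: a set of pairs in which every
`x : X` and every `y : Y` appears. -/
def IsCorrespondence {X Y : Type} (C : Set (X × Y)) : Prop :=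
  (∀ x : X, ∃ y : Y, (x, y) ∈ C) ∧ (∀ y : Y, ∃ x : X, (x, y) ∈ C)

/-- The rank of a tuple: the number of distinct elements appearing in it. -/
noncomputable def tupleRank {X : Type} {n : ℕ} (t : Fin n → X) : ℕ :=
  Set.ncard (Set.range t)

/-- A `K`-order network on a finite nonempty node set `X`: relationship functions
`r k : X^{k+1} → [0,1]` for `0 ≤ k ≤ K`, symmetric under permutations of the arguments,
and such that any subtuple with the same set of distinct elements as the full tuple
carries the same relationship value. -/
structure HONetwork (K : ℕ) (X : Type) [Fintype X] [Nonempty X] : Type where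
  r : ∀ k : ℕ, (Fin (k + 1) → X) → ℝ
  r_nonneg : ∀ k, k ≤ K → ∀ t : Fin (k + 1) → X, 0 ≤ r k t
  r_le_one : ∀ k, k ≤ K → ∀ t : Fin (k + 1) → X, r k t ≤ 1
  symm : ∀ k, k ≤ K → ∀ (t : Fin (k + 1) → X) (σ : Equiv.Perm (Fin (k + 1))),
    r k (t ∘ σ) = r k t
  identity : ∀ k, k ≤ K → ∀ k', k' ≤ K → ∀ (t : Fin (k + 1) → X)
    (ι : Fin (k' + 1) → Fin (k + 1)), StrictMono ι →
    Set.range (t ∘ ι) = Set.range t → r k' (t ∘ ι) = r k t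

/-- The `k`-order network difference `Γ^k_{X,Y}(C)`: the largest value of
`|r_X^k(x_{0:k}) − r_Y^k(y_{0:k})|` over tuples of pairs of correspondents in `C`. -/
noncomputable def Gamma {K : ℕ} {X Y : Type} [Fintype X] [Nonempty X] [Fintype Y] [Nonempty Y]
    (NX : HONetwork K X) (NY : HONetwork K Y) (k : ℕ) (C : Set (X × Y)) : ℝ :=
  sSup { v : ℝ | ∃ (tx : Fin (k + 1) → X) (ty : Fin (k + 1) → Y),
    (∀ i, (tx i, ty i) ∈ C) ∧ v = |NX.r k tx - NY.r k ty| }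

/-- The `k`-order network distance: minimum of `Γ^k_{X,Y}(C)` over correspondences `C`. -/
noncomputable def dN {K : ℕ} {X Y : Type} [Fintype X] [Nonempty X] [Fintype Y] [Nonempty Y]
    (k : ℕ) (NX : HONetwork K X) (NY : HONetwork K Y) : ℝ :=
  sInf { v : ℝ | ∃ C : Set (X × Y), IsCorrespondence C ∧ v = Gamma NX NY k C }

/-- The `p`-norm of a vector in `ℝ^{K+1}`, `1 ≤ p ≤ ∞`. -/
noncomputable def pNorm (K : ℕ) (p : ℝ≥0∞) [Fact (1 ≤ p)] (v : Fin (K + 1) → ℝ) : ℝ :=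
  ‖(WithLp.equiv p (Fin (K + 1) → ℝ)).symm v‖

/-- The `p`-norm network distance: minimum over correspondences `C` of the `p`-norm of the
vector `(Γ^0_{X,Y}(C), …, Γ^K_{X,Y}(C))`. -/
noncomputable def dNp {K : ℕ} {X Y : Type} [Fintype X] [Nonempty X] [Fintype Y] [Nonempty Y]
    (p : ℝ≥0∞) [Fact (1 ≤ p)] (NX : HONetwork K X) (NY : HONetwork K Y) : ℝ :=
  sInf { v : ℝ | ∃ C : Set (X × Y), IsCorrespondence C ∧
    v = pNorm K p (fun k : Fin (K + 1) => Gamma NX NY (k : ℕ) C) }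

/-- Two `K`-order networks are `k`-isomorphic if a bijection of the node sets preserves the
`k`-order relationship functions. -/
def kIsomorphic {K : ℕ} {X Y : Type} [Fintype X] [Nonempty X] [Fintype Y] [Nonempty Y]
    (k : ℕ) (NX : HONetwork K X) (NY : HONetwork K Y) : Prop :=
  ∃ φ : X ≃ Y, ∀ t : Fin (k + 1) → X, NY.r k (fun i => φ (t i)) = NX.r k t

/-- Two `K`-order networks are isomorphic if a bijection of the node sets preserves the
`k`-order relationship functions for all `0 ≤ k ≤ K`. -/
def Isomorphic {K : ℕ} {X Y : Type} [Fintype X] [Nonempty X] [Fintype Y] [Nonempty Y]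
    (NX : HONetwork K X) (NY : HONetwork K Y) : Prop :=
  ∃ φ : X ≃ Y, ∀ k, k ≤ K → ∀ t : Fin (k + 1) → X, NY.r k (fun i => φ (t i)) = NX.r k t

/-- A `K`-order dissimilarity network: a `K`-order network whose relationship functions
decompose as `r^k = d^k + ε · rank`, with nonnegative dissimilarity functions `d^k`
satisfying the order increasing property, and `0 < ε ≤ 1 − (1/K) · max d^K`. -/
structure DissimNetwork (K : ℕ) (X : Type) [Fintype X] [Nonempty X]
    extends HONetwork K X where
  dfun : ∀ k : ℕ, (Fin (k + 1) → X) → ℝ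
  eps : ℝ
  dfun_nonneg : ∀ k, k ≤ K → ∀ t : Fin (k + 1) → X, 0 ≤ dfun k t
  decomp : ∀ k, k ≤ K → ∀ t : Fin (k + 1) → X,
    r k t = dfun k t + eps * (tupleRank t : ℝ)
  order_incr : ∀ k : ℕ, k + 1 ≤ K → ∀ t : Fin (k + 2) → X,
    dfun k (fun i : Fin (k + 1) => t i.castSucc) ≤ dfun (k + 1) t
  eps_pos : 0 < eps
  eps_le : ∀ t : Fin (K + 1) → X, eps ≤ 1 - (1 / (K : ℝ)) * dfun K t

/-- A `K`-order proximity network: a `K`-order network whose relationship functions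
decompose as `r^k = p^k − ε · rank`, with nonnegative proximity functions `p^k`
satisfying the order decreasing property, and `0 < ε ≤ (1/K) · min p^K`. -/
structure ProxNetwork (K : ℕ) (X : Type) [Fintype X] [Nonempty X]
    extends HONetwork K X where
  pfun : ∀ k : ℕ, (Fin (k + 1) → X) → ℝ
  eps : ℝ
  pfun_nonneg : ∀ k, k ≤ K → ∀ t : Fin (k + 1) → X, 0 ≤ pfun k t
  decomp : ∀ k, k ≤ K → ∀ t : Fin (k + 1) → X,
    r k t = pfun k t - eps * (tupleRank t : ℝ)
  order_decr : ∀ k : ℕ, k + 1 ≤ K → ∀ t : Fin (k + 2) → X,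
    pfun (k + 1) t ≤ pfun k (fun i : Fin (k + 1) => t i.castSucc)
  eps_pos : 0 < eps
  eps_le : ∀ t : Fin (K + 1) → X, eps ≤ (1 / (K : ℝ)) * pfun K t

/-! A correspondence with vanishing network difference matches relationship values exactly, and
on proximity networks this forces it to be the graph of a bijection: for `k ≥ 1` the order
decreasing property and the rank penalty give
`r^k(y, y', …, y') ≤ p^0(y) − 2ε < p^0(y) − ε = r^k(y, …, y)` whenever `y ≠ y'`, so no node
corresponds to two distinct nodes. The other metric axioms hold for arbitrary networks: inverting
a correspondence gives symmetry and composing two gives the triangle inequality. -/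

open scoped SetRel

namespace IsCorrespondence

variable {X Y Z : Type}

lemma univ [Nonempty X] [Nonempty Y] : IsCorrespondence (Set.univ : SetRel X Y) :=
  ⟨fun _ => ⟨Classical.arbitrary Y, trivial⟩, fun _ => ⟨Classical.arbitrary X, trivial⟩⟩

lemma inv {C : SetRel X Y} (hC : IsCorrespondence C) : IsCorrespondence C.inv :=
  ⟨hC.2, hC.1⟩

lemma comp {C₁ : SetRel X Z} {C₂ : SetRel Z Y} (h₁ : IsCorrespondence C₁)
    (h₂ : IsCorrespondence C₂) : IsCorrespondence (C₁ ○ C₂) := by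
  constructor
  · intro x
    obtain ⟨z, hxz⟩ := h₁.1 x
    obtain ⟨y, hzy⟩ := h₂.1 z
    exact ⟨y, z, hxz, hzy⟩
  · intro y
    obtain ⟨z, hzy⟩ := h₂.2 y
    obtain ⟨x, hxz⟩ := h₁.2 z
    exact ⟨x, z, hxz, hzy⟩

lemma graph_equiv (φ : X ≃ Y) : IsCorrespondence (Function.graph φ) :=
  ⟨fun x => ⟨φ x, rfl⟩, fun y => ⟨φ.symm y, φ.apply_symm_apply y⟩⟩

end IsCorrespondence

section Gamma

variable {K k : ℕ} {X Y Z : Type} [Fintype X] [Nonempty X] [Fintype Y] [Nonempty Y]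
  [Fintype Z] [Nonempty Z] {NX : HONetwork K X} {NY : HONetwork K Y} {NZ : HONetwork K Z}
  {C : SetRel X Y}

lemma abs_sub_le_Gamma {tx : Fin (k + 1) → X} {ty : Fin (k + 1) → Y}
    (h : ∀ i, (tx i, ty i) ∈ C) : |NX.r k tx - NY.r k ty| ≤ Gamma NX NY k C := by
  refine le_csSup ?_ ⟨tx, ty, h, rfl⟩
  refine ((Set.finite_range fun t : (Fin (k + 1) → X) × (Fin (k + 1) → Y) =>
    |NX.r k t.1 - NY.r k t.2|).subset ?_).bddAbove
  rintro _ ⟨tx, ty, -, rfl⟩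
  exact ⟨(tx, ty), rfl⟩

lemma Gamma_le {B : ℝ} (hC : IsCorrespondence C)
    (h : ∀ tx ty, (∀ i, (tx i, ty i) ∈ C) → |NX.r k tx - NY.r k ty| ≤ B) :
    Gamma NX NY k C ≤ B := by
  obtain ⟨y, hy⟩ := hC.1 (Classical.arbitrary X)
  refine csSup_le ⟨_, fun _ => Classical.arbitrary X, fun _ => y, fun _ => hy, rfl⟩ ?_
  rintro _ ⟨tx, ty, hxy, rfl⟩
  exact h tx ty hxy

lemma Gamma_nonneg (hC : IsCorrespondence C) : 0 ≤ Gamma NX NY k C := by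
  obtain ⟨y, hy⟩ := hC.1 (Classical.arbitrary X)
  exact (abs_nonneg _).trans (abs_sub_le_Gamma (tx := fun _ => Classical.arbitrary X)
    (ty := fun _ => y) fun _ => hy)

lemma r_eq_of_Gamma_eq_zero (h : Gamma NX NY k C = 0) {tx : Fin (k + 1) → X}
    {ty : Fin (k + 1) → Y} (hxy : ∀ i, (tx i, ty i) ∈ C) : NX.r k tx = NY.r k ty :=
  sub_eq_zero.mp (abs_nonpos_iff.mp (h ▸ abs_sub_le_Gamma hxy))

lemma Gamma_inv : Gamma NY NX k C.inv = Gamma NX NY k C := by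
  unfold Gamma
  congr 1
  ext v
  constructor
  · rintro ⟨ty, tx, h, rfl⟩
    exact ⟨tx, ty, h, abs_sub_comm _ _⟩
  · rintro ⟨tx, ty, h, rfl⟩
    exact ⟨ty, tx, h, abs_sub_comm _ _⟩

lemma Gamma_comp_le {C₁ : SetRel X Z} {C₂ : SetRel Z Y} (hC : IsCorrespondence (C₁ ○ C₂)) :
    Gamma NX NY k (C₁ ○ C₂) ≤ Gamma NX NZ k C₁ + Gamma NZ NY k C₂ := by
  refine Gamma_le hC fun tx ty hxy => ?_
  choose tz hxz hzy using hxy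
  calc |NX.r k tx - NY.r k ty|
      ≤ |NX.r k tx - NZ.r k tz| + |NZ.r k tz - NY.r k ty| := abs_sub_le _ _ _
    _ ≤ Gamma NX NZ k C₁ + Gamma NZ NY k C₂ :=
      add_le_add (abs_sub_le_Gamma hxz) (abs_sub_le_Gamma hzy)

lemma Gamma_graph_eq_zero {φ : X ≃ Y} (hφ : ∀ t : Fin (k + 1) → X, NY.r k (φ ∘ t) = NX.r k t) :
    Gamma NX NY k (Function.graph φ) = 0 := by
  refine le_antisymm (Gamma_le (.graph_equiv φ) fun tx ty hxy => ?_)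
    (Gamma_nonneg (.graph_equiv φ))
  obtain rfl : φ ∘ tx = ty := funext hxy
  rw [hφ, sub_self, abs_zero]

end Gamma

section dN

variable {K : ℕ} (k : ℕ) {X Y Z : Type} [Fintype X] [Nonempty X] [Fintype Y] [Nonempty Y]
  [Fintype Z] [Nonempty Z] (NX : HONetwork K X) (NY : HONetwork K Y) (NZ : HONetwork K Z)

lemma exists_dN_eq_Gamma :
    ∃ C : SetRel X Y, IsCorrespondence C ∧ dN k NX NY = Gamma NX NY k C := by
  refine Set.Nonempty.csInf_mem
    (s := {v | ∃ C : SetRel X Y, IsCorrespondence C ∧ v = Gamma NX NY k C})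
    ⟨_, _, .univ, rfl⟩ ?_
  refine (Set.finite_range fun C : SetRel X Y => Gamma NX NY k C).subset ?_
  rintro _ ⟨C, -, rfl⟩
  exact ⟨C, rfl⟩

variable {k NX NY} in
lemma dN_le_Gamma {C : SetRel X Y} (hC : IsCorrespondence C) : dN k NX NY ≤ Gamma NX NY k C := by
  refine csInf_le ⟨0, ?_⟩ ⟨C, hC, rfl⟩
  rintro _ ⟨C', hC', rfl⟩
  exact Gamma_nonneg hC'

lemma dN_nonneg : 0 ≤ dN k NX NY := by
  obtain ⟨C, hC, hdC⟩ := exists_dN_eq_Gamma k NX NY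
  exact hdC ▸ Gamma_nonneg hC

lemma dN_le_dN_swap : dN k NX NY ≤ dN k NY NX := by
  obtain ⟨C, hC, hdC⟩ := exists_dN_eq_Gamma k NY NX
  exact hdC ▸ Gamma_inv (C := C) ▸ dN_le_Gamma hC.inv

lemma dN_comm : dN k NX NY = dN k NY NX :=
  le_antisymm (dN_le_dN_swap k NX NY) (dN_le_dN_swap k NY NX)

lemma dN_triangle : dN k NX NY ≤ dN k NX NZ + dN k NZ NY := by
  obtain ⟨C₁, hC₁, hdC₁⟩ := exists_dN_eq_Gamma k NX NZ
  obtain ⟨C₂, hC₂, hdC₂⟩ := exists_dN_eq_Gamma k NZ NY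
  rw [hdC₁, hdC₂]
  exact (dN_le_Gamma (hC₁.comp hC₂)).trans (Gamma_comp_le (hC₁.comp hC₂))

variable {k NX NY} in
lemma dN_eq_zero_of_kIsomorphic (h : kIsomorphic k NX NY) : dN k NX NY = 0 := by
  obtain ⟨φ, hφ⟩ := h
  exact le_antisymm ((dN_le_Gamma (.graph_equiv φ)).trans_eq (Gamma_graph_eq_zero hφ))
    (dN_nonneg k NX NY)

end dN

lemma tupleRank_const {X : Type} {n : ℕ} [NeZero n] (x : X) :
    tupleRank (fun _ : Fin n => x) = 1 := by
  rw [tupleRank, Set.range_const, Set.ncard_singleton]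

lemma tupleRank_cons_const {X : Type} {n : ℕ} [NeZero n] {x y : X} (hxy : x ≠ y) :
    tupleRank (Fin.cons x fun _ : Fin n => y : Fin (n + 1) → X) = 2 := by
  rw [tupleRank, Fin.range_cons, Set.range_const, Set.ncard_pair hxy]

namespace ProxNetwork

variable {K k : ℕ} {X Y : Type} [Fintype X] [Nonempty X] [Fintype Y] [Nonempty Y]
  (P : ProxNetwork K Y)

lemma pfun_le_pfun_zero : ∀ {j : ℕ}, j ≤ K → ∀ t : Fin (j + 1) → Y,
    P.pfun j t ≤ P.pfun 0 (fun _ => t 0)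
  | 0, _, t => le_of_eq (congrArg _ (funext fun i => congrArg t (Fin.eq_zero i)))
  | j + 1, hj, t => (P.order_decr j hj t).trans (pfun_le_pfun_zero (by omega) _)

lemma r_const (hk : k ≤ K) (y : Y) : P.r k (fun _ => y) = P.pfun 0 (fun _ => y) - P.eps := by
  have hid : P.r 0 (fun _ => y) = P.r k (fun _ => y) :=
    P.identity k hk 0 (Nat.zero_le K) (fun _ => y) (fun _ : Fin 1 => 0)
      (Subsingleton.strictMono (α := Fin 1) _) (by simp only [Function.comp_def, Set.range_const])
  rw [← hid, P.decomp 0 (Nat.zero_le K), tupleRank_const, Nat.cast_one, mul_one]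

lemma r_cons_lt_r_const [NeZero k] (hk : k ≤ K) {y y' : Y} (hne : y ≠ y') :
    P.r k (Fin.cons y fun _ => y') < P.r k (fun _ => y) := by
  have hε := P.eps_pos
  have hchain := P.pfun_le_pfun_zero hk (Fin.cons y fun _ => y')
  rw [Fin.cons_zero] at hchain
  rw [P.decomp k hk, tupleRank_cons_const hne, P.r_const hk]
  push_cast
  linarith

lemma eq_of_Gamma_eq_zero [NeZero k] (hk : k ≤ K) {NX : HONetwork K X} {C : SetRel X Y}
    (h : Gamma NX P.toHONetwork k C = 0) {x : X} {y y' : Y} (hy : (x, y) ∈ C)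
    (hy' : (x, y') ∈ C) : y = y' := by
  by_contra hne
  have hlt := P.r_cons_lt_r_const hk hne
  rw [← r_eq_of_Gamma_eq_zero h (tx := fun _ => x) fun _ => hy,
    ← r_eq_of_Gamma_eq_zero h (tx := fun _ => x) (Fin.cases hy fun _ => hy')] at hlt
  exact lt_irrefl _ hlt

end ProxNetwork

lemma kIsomorphic_of_Gamma_eq_zero {K k : ℕ} [NeZero k] (hk : k ≤ K) {X Y : Type} [Fintype X]
    [Nonempty X] [Fintype Y] [Nonempty Y] {PX : ProxNetwork K X} {PY : ProxNetwork K Y}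
    {C : SetRel X Y} (hC : IsCorrespondence C) (h : Gamma PX.toHONetwork PY.toHONetwork k C = 0) :
    kIsomorphic k PX.toHONetwork PY.toHONetwork := by
  choose f hf using hC.1
  have hinj : f.Injective := fun a b hab =>
    PX.eq_of_Gamma_eq_zero hk (Gamma_inv.trans h) (hf a) (hab ▸ hf b)
  have hsurj : f.Surjective := fun y =>
    let ⟨x, hx⟩ := hC.2 y
    ⟨x, PY.eq_of_Gamma_eq_zero hk h (hf x) hx⟩
  exact ⟨.ofBijective f ⟨hinj, hsurj⟩, fun t => (r_eq_of_Gamma_eq_zero h fun i => hf (t i)).symm⟩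

theorem dP_metric_general (K k : ℕ) (hk1 : 1 ≤ k) (hk : k ≤ K)
    (X Y Z : Type) [Fintype X] [Nonempty X] [Fintype Y] [Nonempty Y] [Fintype Z] [Nonempty Z]
    (PX : ProxNetwork K X) (PY : ProxNetwork K Y) (PZ : ProxNetwork K Z) :
    0 ≤ dN k PX.toHONetwork PY.toHONetwork ∧
    dN k PX.toHONetwork PY.toHONetwork = dN k PY.toHONetwork PX.toHONetwork ∧
    dN k PX.toHONetwork PY.toHONetwork ≤
      dN k PX.toHONetwork PZ.toHONetwork + dN k PZ.toHONetwork PY.toHONetwork ∧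
    (dN k PX.toHONetwork PY.toHONetwork = 0 ↔
      kIsomorphic k PX.toHONetwork PY.toHONetwork) := by
  have : NeZero k := ⟨by omega⟩
  refine ⟨dN_nonneg k _ _, dN_comm k _ _, dN_triangle k _ _ _, fun h0 => ?_,
    dN_eq_zero_of_kIsomorphic⟩
  obtain ⟨C, hC, hdC⟩ := exists_dN_eq_Gamma k PX.toHONetwork PY.toHONetwork
  exact kIsomorphic_of_Gamma_eq_zero hk hC (hdC ▸ h0)

/-- for `K ≥ 1` and `1 ≤ k ≤ K`, the `k`-order network distance restricted to
`K`-order proximity networks is a metric modulo `k`-isomorphism. -/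
theorem dP_metric (K k : ℕ) (hK : 1 ≤ K) (hk1 : 1 ≤ k) (hk : k ≤ K)
    (X Y Z : Type) [Fintype X] [Nonempty X] [Fintype Y] [Nonempty Y] [Fintype Z] [Nonempty Z]
    (PX : ProxNetwork K X) (PY : ProxNetwork K Y) (PZ : ProxNetwork K Z) :
    0 ≤ dN k PX.toHONetwork PY.toHONetwork ∧
    dN k PX.toHONetwork PY.toHONetwork = dN k PY.toHONetwork PX.toHONetwork ∧
    dN k PX.toHONetwork PY.toHONetwork ≤
      dN k PX.toHONetwork PZ.toHONetwork + dN k PZ.toHONetwork PY.toHONetwork ∧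
    (dN k PX.toHONetwork PY.toHONetwork = 0 ↔
      kIsomorphic k PX.toHONetwork PY.toHONetwork) :=
  dP_metric_general K k hk1 hk X Y Z PX PY PZ
end

section
/- There exist 1-order networks N_X and N_Y that are not 1-isomorphic (in particular, their node sets have different cardinalities) but whose 1-order network distance is zero: d_N^1(N_X,N_Y) = 0. Concretely, one may take X = {x_1,x_2,x_3} with r_X^0 ≡ 1 and r_X^1(x_i,x_j) = 1 for all i,j, and Y = {y_1,y_2} with r_Y^0 ≡ 1 and r_Y^1(y_i,y_j) = 1 for all i,j; then the correspondence C = {(x_1,y_1),(x_2,y_2),(x_3,y_2)} witnesses Γ^1_{X,Y}(C) = 0. -/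
open scoped ENNReal

/-! Both networks carry the constant value `1`, so every pair of correspondent tuples has
difference `0` and `Γ¹` vanishes on every correspondence, whence `d¹_N = 0`; yet no
bijection exists between a 3-element and a 2-element node set. -/

namespace HONetwork

def const (K : ℕ) (X : Type) [Fintype X] [Nonempty X] (c : ℝ) (hc₀ : 0 ≤ c) (hc₁ : c ≤ 1) :
    HONetwork K X where
  r _ _ := c
  r_nonneg _ _ _ := hc₀
  r_le_one _ _ _ := hc₁
  symm _ _ _ _ := rfl
  identity _ _ _ _ _ _ _ _ := rfl

end HONetwork

section Distance

variable {K : ℕ} {X Y : Type} [Fintype X] [Nonempty X] [Fintype Y] [Nonempty Y]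

theorem Gamma_nonneg_s19 (NX : HONetwork K X) (NY : HONetwork K Y) (k : ℕ) (C : Set (X × Y)) :
    0 ≤ Gamma NX NY k C :=
  Real.sSup_nonneg <| by
    rintro _ ⟨tx, ty, -, rfl⟩
    exact abs_nonneg _

theorem Gamma_const_eq_zero {c : ℝ} (hc₀ : 0 ≤ c) (hc₁ : c ≤ 1) (k : ℕ) (C : Set (X × Y)) :
    Gamma (HONetwork.const K X c hc₀ hc₁) (HONetwork.const K Y c hc₀ hc₁) k C = 0 := by
  refine le_antisymm (Real.sSup_nonpos ?_) (Gamma_nonneg_s19 _ _ k C)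
  rintro _ ⟨tx, ty, -, rfl⟩
  exact (abs_eq_zero.mpr (sub_self c)).le

theorem dN_eq_zero_of_Gamma_eq_zero {NX : HONetwork K X} {NY : HONetwork K Y} {k : ℕ}
    {C : Set (X × Y)} (hC : IsCorrespondence C) (hΓ : Gamma NX NY k C = 0) :
    dN k NX NY = 0 := by
  have hzero : (0 : ℝ) ∈ { v : ℝ | ∃ C : Set (X × Y), IsCorrespondence C ∧
      v = Gamma NX NY k C } := ⟨C, hC, hΓ.symm⟩
  have hnonneg : ∀ v ∈ { v : ℝ | ∃ C : Set (X × Y), IsCorrespondence C ∧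
      v = Gamma NX NY k C }, 0 ≤ v := by
    rintro _ ⟨C', -, rfl⟩
    exact Gamma_nonneg_s19 NX NY k C'
  exact le_antisymm (csInf_le ⟨0, hnonneg⟩ hzero) (Real.sInf_nonneg hnonneg)

theorem not_kIsomorphic_of_card_ne (k : ℕ) (NX : HONetwork K X) (NY : HONetwork K Y)
    (hcard : Fintype.card X ≠ Fintype.card Y) : ¬ kIsomorphic k NX NY :=
  fun ⟨φ, _⟩ => hcard (Fintype.card_congr φ)

end Distance

/-- there exist `1`-order networks, with all relationship values equal to `1`,
on node sets of cardinalities `3` and `2`, which are not `1`-isomorphic yet have zero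
`1`-order network distance; the correspondence `{(x₁,y₁),(x₂,y₂),(x₃,y₂)}` witnesses
`Γ^1_{X,Y}(C) = 0`. -/
theorem exists_not_isomorphic_with_zero_dN :
    ∃ (NX : HONetwork 1 (Fin 3)) (NY : HONetwork 1 (Fin 2)),
      (∀ k, k ≤ 1 → ∀ t : Fin (k + 1) → Fin 3, NX.r k t = 1) ∧
      (∀ k, k ≤ 1 → ∀ t : Fin (k + 1) → Fin 2, NY.r k t = 1) ∧
      ¬ kIsomorphic 1 NX NY ∧
      Gamma NX NY 1 { q : Fin 3 × Fin 2 |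
        (q.1 = 0 ∧ q.2 = 0) ∨ (q.1 = 1 ∧ q.2 = 1) ∨ (q.1 = 2 ∧ q.2 = 1) } = 0 ∧
      dN 1 NX NY = 0 := by
  set C : Set (Fin 3 × Fin 2) :=
    { q | (q.1 = 0 ∧ q.2 = 0) ∨ (q.1 = 1 ∧ q.2 = 1) ∨ (q.1 = 2 ∧ q.2 = 1) }
  have hC : IsCorrespondence C := by
    unfold IsCorrespondence C
    decide
  have hΓ := Gamma_const_eq_zero (K := 1) zero_le_one le_rfl 1 C
  exact ⟨_, _, fun _ _ _ => rfl, fun _ _ _ => rfl,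
    not_kIsomorphic_of_card_ne 1 _ _ (by decide), hΓ, dN_eq_zero_of_Gamma_eq_zero hC hΓ⟩
end
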